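/- arXiv:1008.5270 — 2 statements merged into one kernel-verified Lean document; each statement's English description precedes it below -/
import Mathlib

section
/- Let p ∈ (0,1). For every complex number A with |A − 1/p| ≤ p there exist w₀ ∈ ℂ with w₀ ≠ 0 and a function f ∈ Σ*(p,w₀) such that a₂(f) = A. That is, for fixed p the exact set of variability of the second Taylor coefficient a₂(f), as f ranges over the union of the classes Σ*(p,w₀) over all w₀ ≠ 0, is the closed disc {A : |A − 1/p| ≤ p}. -/
open Complex Metric Set

/-- The second Taylor coefficient `a₂(f) = f''(0)/2`. -/
noncomputable def a2 (f : ℂ → ℂ) : ℂ := iteratedDeriv 2 f 0 / 2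

/-- `f` belongs to the class `Σ*(p, w₀)` with associated holomorphic function `P`:
`f` is holomorphic on the unit disc except for a simple pole at `p`, `f 0 = 0`,
`f' 0 = 1`, `f` omits `w₀`, and
`P z = -z f'(z)/(f z - w₀) - p/(z - p) + p z/(1 - p z)` extends holomorphically
to the unit disc with `P 0 = 1` and `Re (P z) > 0` there. -/
def SigmaStarWith (p : ℝ) (w₀ : ℂ) (f P : ℂ → ℂ) : Prop :=
  (∃ g : ℂ → ℂ, DifferentiableOn ℂ g (ball (0 : ℂ) 1) ∧ g p ≠ 0 ∧
      ∀ z ∈ ball (0 : ℂ) 1, z ≠ (p : ℂ) → f z = g z / (z - p)) ∧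
  f 0 = 0 ∧ deriv f 0 = 1 ∧
  (∀ z ∈ ball (0 : ℂ) 1, z ≠ (p : ℂ) → f z ≠ w₀) ∧
  DifferentiableOn ℂ P (ball (0 : ℂ) 1) ∧ P 0 = 1 ∧
  (∀ z ∈ ball (0 : ℂ) 1, 0 < (P z).re) ∧
  (∀ z ∈ ball (0 : ℂ) 1, z ≠ (p : ℂ) →
    P z = -z * deriv f z / (f z - w₀) - p / (z - p) + p * z / (1 - p * z))

/-- `f` belongs to the class `Σ*(p, w₀)`. -/
def SigmaStar (p : ℝ) (w₀ : ℂ) (f : ℂ → ℂ) : Prop :=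
  ∃ P : ℂ → ℂ, SigmaStarWith p w₀ f P

/-- `ω` is the Schwarz function associated to `P`, i.e. a holomorphic self-map of
the unit disc fixing `0` with `P = (1 + ω)/(1 - ω)`. -/
def SchwarzOf (P ω : ℂ → ℂ) : Prop :=
  DifferentiableOn ℂ ω (ball (0 : ℂ) 1) ∧
  MapsTo ω (ball (0 : ℂ) 1) (ball (0 : ℂ) 1) ∧ ω 0 = 0 ∧
  ∀ z ∈ ball (0 : ℂ) 1, P z = (1 + ω z) / (1 - ω z)

/-! With `μ = (A - 1/p)/p` we have `‖μ‖ ≤ 1`, and there is a probability measure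
`ν = ∑ cᵢ δ_{ζᵢ}` on the closed disc with `∫ ζ dν = p` and `∫ ζ² dν = p² - (1 - p²) μ`: a
two-point measure on the chord of the unit circle through `p` in a direction fixed by `arg μ`,
mixed with `δ_p`. Its Herglotz transform `P(z) = ∫ (1 + ζz)/(1 - ζz) dν` has positive real part,
`P(0) = 1` and `P = 1 - z L'` for `L(z) = 2 ∫ log (1 - ζz) dν`. For `w₀ = -p/(1 - p²)` the
function `f = w₀ (1 + p e^L / ((z - p)(1 - pz)))` lies in `Σ*(p, w₀)` with this `P`, and `a₂(f)`
is affine in `L''(0) = -2 ∫ ζ² dν`, which makes it `1/p + p μ = A`. -/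

open Filter Topology

lemma re_one_sub_pos {w : ℂ} (hw : ‖w‖ < 1) : 0 < (1 - w).re := by
  have := Complex.re_le_norm w
  simp only [Complex.sub_re, Complex.one_re]
  linarith

lemma re_one_add_div_one_sub_pos {w : ℂ} (hw : ‖w‖ < 1) : 0 < ((1 + w) / (1 - w)).re := by
  have hne : 1 - w ≠ 0 := fun h => by simpa using (re_one_sub_pos hw).ne' (by simp [h])
  have hsq : Complex.normSq w < 1 := by
    rw [← Complex.sq_norm]
    nlinarith [norm_nonneg w]
  rw [Complex.normSq_apply] at hsq
  rw [Complex.div_re, ← add_div]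
  apply div_pos _ (Complex.normSq_pos.2 hne)
  simp only [Complex.add_re, Complex.sub_re, Complex.one_re, Complex.add_im, Complex.sub_im,
    Complex.one_im]
  nlinarith

lemma norm_mul_lt_one {ζ z : ℂ} (hζ : ‖ζ‖ ≤ 1) (hz : z ∈ ball (0 : ℂ) 1) : ‖ζ * z‖ < 1 := by
  rw [mem_ball_zero_iff] at hz
  rw [norm_mul]
  nlinarith [norm_nonneg z, norm_nonneg ζ]

lemma one_sub_mul_ne_zero {ζ z : ℂ} (hζ : ‖ζ‖ ≤ 1) (hz : z ∈ ball (0 : ℂ) 1) :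
    1 - ζ * z ≠ 0 := fun h => (re_one_sub_pos (norm_mul_lt_one hζ hz)).ne' (by simp [h])

section Herglotz

variable {ι : Type*} [Fintype ι] {c : ι → ℝ} {ζ : ι → ℂ}

/-- `exp ∘ herglotzLog c ζ` is `∏ i, (1 - ζ i z) ^ (2 c i)`; for a probability vector `c` and
points `ζ i` of the closed disc, `1 - z L'(z)` is the Herglotz transform
`∑ i, c i (1 + ζ i z) / (1 - ζ i z)` of the discrete measure `∑ i, c i δ_{ζ i}`. -/
noncomputable def herglotzLog (c : ι → ℝ) (ζ : ι → ℂ) (z : ℂ) : ℂ :=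
  ∑ i, 2 * (c i : ℂ) * log (1 - ζ i * z)

lemma herglotzLog_zero : herglotzLog c ζ 0 = 0 := by
  simp [herglotzLog]

lemma hasDerivAt_herglotzLog (hζ : ∀ i, ‖ζ i‖ ≤ 1) {z : ℂ} (hz : z ∈ ball (0 : ℂ) 1) :
    HasDerivAt (herglotzLog c ζ) (-∑ i, 2 * (c i : ℂ) * ζ i / (1 - ζ i * z)) z := by
  have hlog : ∀ i ∈ Finset.univ, HasDerivAt (fun w => 2 * (c i : ℂ) * log (1 - ζ i * w))
      (2 * c i * (-ζ i / (1 - ζ i * z))) z := fun i _ =>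
    ((((hasDerivAt_id z).const_mul (ζ i)).const_sub 1).clog
      (Or.inl (re_one_sub_pos (norm_mul_lt_one (hζ i) hz)))).const_mul _ |>.congr_deriv
      (by simp)
  refine (HasDerivAt.fun_sum hlog).congr_deriv ?_
  rw [← Finset.sum_neg_distrib]
  exact Finset.sum_congr rfl fun i _ => by ring

lemma differentiableOn_herglotzLog (hζ : ∀ i, ‖ζ i‖ ≤ 1) :
    DifferentiableOn ℂ (herglotzLog c ζ) (ball (0 : ℂ) 1) := fun _ hz =>
  (hasDerivAt_herglotzLog hζ hz).differentiableAt.differentiableWithinAt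

lemma deriv_herglotzLog_zero (hζ : ∀ i, ‖ζ i‖ ≤ 1) :
    deriv (herglotzLog c ζ) 0 = -2 * ∑ i, c i * ζ i := by
  rw [(hasDerivAt_herglotzLog hζ (mem_ball_self one_pos)).deriv, Finset.mul_sum,
    ← Finset.sum_neg_distrib]
  exact Finset.sum_congr rfl fun i _ => by simp only [mul_zero, sub_zero, div_one]; ring

lemma deriv_deriv_herglotzLog_zero (hζ : ∀ i, ‖ζ i‖ ≤ 1) :
    deriv (deriv (herglotzLog c ζ)) 0 = -2 * ∑ i, c i * ζ i ^ 2 := by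
  have hderiv : deriv (herglotzLog c ζ) =ᶠ[𝓝 0]
      fun z => -∑ i, 2 * (c i : ℂ) * ζ i / (1 - ζ i * z) := by
    filter_upwards [ball_mem_nhds (0 : ℂ) one_pos] with z hz
    exact (hasDerivAt_herglotzLog hζ hz).deriv
  have hterm : ∀ i ∈ Finset.univ, HasDerivAt (fun z => 2 * (c i : ℂ) * ζ i / (1 - ζ i * z))
      (2 * c i * ζ i ^ 2) 0 := fun i _ =>
    ((hasDerivAt_const 0 _).div (((hasDerivAt_id 0).const_mul (ζ i)).const_sub 1)
      (by simp)).congr_deriv (by simp only [id_eq, mul_zero, sub_zero, mul_one]; ring)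
  rw [hderiv.deriv_eq, (HasDerivAt.fun_sum hterm).fun_neg.deriv, Finset.mul_sum,
    ← Finset.sum_neg_distrib]
  exact Finset.sum_congr rfl fun i _ => by ring

lemma re_one_sub_mul_deriv_herglotzLog_pos (hc : ∀ i, 0 ≤ c i) (hc1 : ∑ i, c i = 1)
    (hζ : ∀ i, ‖ζ i‖ ≤ 1) {z : ℂ} (hz : z ∈ ball (0 : ℂ) 1) :
    0 < (1 - z * deriv (herglotzLog c ζ) z).re := by
  have hherglotz : 1 - z * deriv (herglotzLog c ζ) z =
      ∑ i, (c i : ℂ) * ((1 + ζ i * z) / (1 - ζ i * z)) := by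
    have hc1' : ∑ i, (c i : ℂ) = 1 := by exact_mod_cast hc1
    have hterm : ∀ i ∈ Finset.univ, (c i : ℂ) * ((1 + ζ i * z) / (1 - ζ i * z)) =
        c i + z * (2 * c i * ζ i / (1 - ζ i * z)) := fun i _ => by
      field_simp [one_sub_mul_ne_zero (hζ i) hz]
      ring
    rw [(hasDerivAt_herglotzLog hζ hz).deriv, Finset.sum_congr rfl hterm,
      Finset.sum_add_distrib, hc1', ← Finset.mul_sum]
    ring
  rw [hherglotz, Complex.re_sum]
  obtain ⟨j, hj⟩ : ∃ j, 0 < c j := by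
    by_contra! h
    linarith [Finset.sum_nonpos fun i (_ : i ∈ Finset.univ) => h i]
  refine Finset.sum_pos' (fun i _ => ?_) ⟨j, Finset.mem_univ j, ?_⟩ <;>
    rw [Complex.re_ofReal_mul]
  · exact mul_nonneg (hc i) (re_one_add_div_one_sub_pos (norm_mul_lt_one (hζ i) hz)).le
  · exact mul_pos hj (re_one_add_div_one_sub_pos (norm_mul_lt_one (hζ j) hz))

end Herglotz

lemma iteratedDeriv_two_eq_of_hasDerivAt_sub_mul {𝕜 : Type*} [NontriviallyNormedField 𝕜]
    {f G : 𝕜 → 𝕜} {w x G' : 𝕜}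
    (hf : ∀ᶠ z in 𝓝 x, HasDerivAt f ((f z - w) * G z) z) (hG : HasDerivAt G G' x) :
    iteratedDeriv 2 f x = (f x - w) * (G x ^ 2 + G') := by
  have hderiv : deriv f =ᶠ[𝓝 x] fun z => (f z - w) * G z := hf.mono fun z hz => hz.deriv
  rw [iteratedDeriv_succ, iteratedDeriv_one, hderiv.deriv_eq,
    ((hf.self_of_nhds.sub_const w).fun_mul hG).deriv]
  ring

section SigmaStarOfLog

variable {p : ℝ} {w₀ : ℂ} {L : ℂ → ℂ}

/-- `f - w₀ = w₀ p e^L / ((z - p)(1 - p z))` has logarithmic derivative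
`L' - 1/(z - p) + p/(1 - p z)`, which turns the defining expression of `Σ*(p, w₀)` into
`1 - z L'(z)`. -/
noncomputable def sigmaStarOfLog (p : ℝ) (w₀ : ℂ) (L : ℂ → ℂ) (z : ℂ) : ℂ :=
  w₀ * (1 + p * exp (L z) / ((z - p) * (1 - p * z)))

lemma sigmaStarOfLog_sub (z : ℂ) :
    sigmaStarOfLog p w₀ L z - w₀ = w₀ * p * exp (L z) / ((z - p) * (1 - p * z)) := by
  rw [sigmaStarOfLog]
  ring

lemma hasDerivAt_sigmaStarOfLog {z : ℂ} (hz : z ≠ p) (hpz : 1 - p * z ≠ 0)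
    (hL : DifferentiableAt ℂ L z) :
    HasDerivAt (sigmaStarOfLog p w₀ L)
      ((sigmaStarOfLog p w₀ L z - w₀) * (deriv L z - 1 / (z - p) + p / (1 - p * z))) z := by
  have hzp : z - p ≠ 0 := sub_ne_zero.2 hz
  have hden : HasDerivAt (fun z : ℂ => (z - p) * (1 - p * z)) ((1 - p * z) - p * (z - p)) z :=
    (((hasDerivAt_id z).sub_const _).mul
      (((hasDerivAt_id z).const_mul _).const_sub 1)).congr_deriv
      (by simp only [id_eq, one_mul, mul_one]; ring)
  refine ((((hL.hasDerivAt.cexp.const_mul _).div hden (mul_ne_zero hzp hpz)).const_add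
    1).const_mul w₀).congr_deriv ?_
  rw [sigmaStarOfLog_sub]
  field_simp
  ring

lemma sigmaStarOfLog_zero (hp : p ≠ 0) (hL0 : L 0 = 0) : sigmaStarOfLog p w₀ L 0 = 0 := by
  have hp' : (p : ℂ) ≠ 0 := by exact_mod_cast hp
  simp [sigmaStarOfLog, hL0, hp']

lemma hasDerivAt_sigmaStarOfLog_of_mem_ball (hp : p ∈ Ioo 0 1)
    (hL : DifferentiableOn ℂ L (ball (0 : ℂ) 1)) {z : ℂ} (hz : z ∈ ball (0 : ℂ) 1)
    (hzp : z ≠ p) :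
    HasDerivAt (sigmaStarOfLog p w₀ L)
      ((sigmaStarOfLog p w₀ L z - w₀) * (deriv L z - 1 / (z - p) + p / (1 - p * z))) z := by
  have hp1 : ‖(p : ℂ)‖ ≤ 1 := by simpa [abs_of_pos hp.1] using hp.2.le
  exact hasDerivAt_sigmaStarOfLog hzp (one_sub_mul_ne_zero hp1 hz)
    (hL.differentiableAt (isOpen_ball.mem_nhds hz))

lemma deriv_sigmaStarOfLog_zero (hp : p ∈ Ioo 0 1) (hw₀ : w₀ ≠ 0)
    (hL : DifferentiableOn ℂ L (ball (0 : ℂ) 1)) (hL0 : L 0 = 0)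
    (hL'0 : deriv L 0 = -(1 / w₀ + 1 / p + p)) :
    deriv (sigmaStarOfLog p w₀ L) 0 = 1 := by
  have hp0 : (p : ℂ) ≠ 0 := by exact_mod_cast hp.1.ne'
  rw [(hasDerivAt_sigmaStarOfLog_of_mem_ball hp hL (mem_ball_self one_pos) hp0.symm).deriv,
    sigmaStarOfLog_zero hp.1.ne' hL0, hL'0]
  field_simp
  ring

theorem sigmaStarWith_sigmaStarOfLog (hp : p ∈ Ioo 0 1) (hw₀ : w₀ ≠ 0)
    (hL : DifferentiableOn ℂ L (ball (0 : ℂ) 1)) (hL0 : L 0 = 0)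
    (hL'0 : deriv L 0 = -(1 / w₀ + 1 / p + p))
    (hre : ∀ z ∈ ball (0 : ℂ) 1, 0 < (1 - z * deriv L z).re) :
    SigmaStarWith p w₀ (sigmaStarOfLog p w₀ L) (fun z => 1 - z * deriv L z) := by
  have hp1 : ‖(p : ℂ)‖ ≤ 1 := by simpa [abs_of_pos hp.1] using hp.2.le
  have hpz : ∀ z ∈ ball (0 : ℂ) 1, 1 - p * z ≠ 0 := fun z hz => one_sub_mul_ne_zero hp1 hz
  have hpp : (p : ℂ) ∈ ball (0 : ℂ) 1 := by simpa [abs_of_pos hp.1] using hp.2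
  have hp0 : (p : ℂ) ≠ 0 := by exact_mod_cast hp.1.ne'
  refine ⟨⟨fun z => w₀ * (z - p) + w₀ * p * exp (L z) / (1 - p * z), ?_, ?_, ?_⟩,
    sigmaStarOfLog_zero hp.1.ne' hL0, deriv_sigmaStarOfLog_zero hp hw₀ hL hL0 hL'0, ?_,
    ?_, by simp, hre, ?_⟩
  · exact ((differentiableOn_id.sub_const _).const_mul _).add
      ((hL.cexp.const_mul _).div (differentiableOn_const _ |>.sub
        (differentiableOn_id.const_mul _)) hpz)
  · simpa [hw₀, hp0, exp_ne_zero] using hpz p hpp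
  · intro z hz hzp
    rw [sigmaStarOfLog]
    field_simp [sub_ne_zero.2 hzp, hpz z hz]
  · intro z hz hzp h
    rw [← sub_eq_zero, sigmaStarOfLog_sub] at h
    simp [hw₀, hp0, exp_ne_zero, sub_ne_zero.2 hzp, hpz z hz] at h
  · exact (differentiableOn_const _).sub (differentiableOn_id.mul
      (hL.deriv isOpen_ball))
  · intro z hz hzp
    rw [(hasDerivAt_sigmaStarOfLog_of_mem_ball hp hL hz hzp).deriv]
    have hne : sigmaStarOfLog p w₀ L z - w₀ ≠ 0 := by
      rw [sigmaStarOfLog_sub]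
      simp [hw₀, hp0, exp_ne_zero, sub_ne_zero.2 hzp, hpz z hz]
    field_simp [hne, sub_ne_zero.2 hzp, hpz z hz]
    ring

lemma a2_sigmaStarOfLog (hp : p ∈ Ioo 0 1) (hw₀ : w₀ ≠ 0)
    (hL : DifferentiableOn ℂ L (ball (0 : ℂ) 1)) (hL0 : L 0 = 0)
    (hL'0 : deriv L 0 = -(1 / w₀ + 1 / p + p)) :
    a2 (sigmaStarOfLog p w₀ L) =
      -(1 / w₀ + w₀ * (deriv (deriv L) 0 + 1 / p ^ 2 + p ^ 2)) / 2 := by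
  have hp0 : (p : ℂ) ≠ 0 := by exact_mod_cast hp.1.ne'
  have hlogDeriv : ∀ᶠ z in 𝓝 0, HasDerivAt (sigmaStarOfLog p w₀ L)
      ((sigmaStarOfLog p w₀ L z - w₀) * (deriv L z - 1 / (z - p) + p / (1 - p * z))) z := by
    filter_upwards [ball_mem_nhds (0 : ℂ) hp.1] with z hz
    refine hasDerivAt_sigmaStarOfLog_of_mem_ball hp hL (ball_subset_ball hp.2.le hz) ?_
    rintro rfl
    simp [abs_of_pos hp.1] at hz
  have hL'' : HasDerivAt (deriv L) (deriv (deriv L) 0) 0 :=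
    ((hL.deriv isOpen_ball).differentiableAt (ball_mem_nhds 0 one_pos)).hasDerivAt
  have hpole : HasDerivAt (fun z : ℂ => 1 / (z - p)) (-1 / p ^ 2) 0 :=
    ((hasDerivAt_const 0 1).div ((hasDerivAt_id 0).sub_const _)
      (by simpa using hp0)).congr_deriv (by simp)
  have hreflected : HasDerivAt (fun z : ℂ => p / (1 - p * z)) (p ^ 2) 0 :=
    ((hasDerivAt_const 0 _).div (((hasDerivAt_id 0).const_mul _).const_sub 1)
      (by simp)).congr_deriv (by simp only [mul_zero, sub_zero, mul_one]; ring)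
  rw [a2,
    iteratedDeriv_two_eq_of_hasDerivAt_sub_mul hlogDeriv ((hL''.sub hpole).add hreflected),
    sigmaStarOfLog_zero hp.1.ne' hL0, hL'0]
  field_simp
  ring

end SigmaStarOfLog

/-- For `ξ = x + i y`, the two points are `(p x ± i √(1 - p²x²)) ξ` on the unit circle, and the
chord joining them passes through `p`. -/
lemma exists_twoPoint_moments {p : ℝ} (hp : |p| < 1) {ξ : ℂ} (hξ : ‖ξ‖ = 1) :
    ∃ a ∈ Icc (0 : ℝ) 1, ∃ ζ₁ ζ₂ : ℂ, ‖ζ₁‖ = 1 ∧ ‖ζ₂‖ = 1 ∧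
      a * ζ₁ + (1 - a) * ζ₂ = p ∧
      a * ζ₁ ^ 2 + (1 - a) * ζ₂ ^ 2 = p ^ 2 - (1 - p ^ 2) * ξ ^ 2 := by
  obtain ⟨x, y, rfl⟩ : ∃ x y : ℝ, ξ = x + y * I := ⟨ξ.re, ξ.im, (re_add_im ξ).symm⟩
  have hxy : x ^ 2 + y ^ 2 = 1 := by
    rwa [norm_add_mul_I, Real.sqrt_eq_one] at hξ
  have hp2 : p ^ 2 < 1 := by nlinarith [abs_nonneg p, sq_abs p]
  have hpx : (p * x) ^ 2 < 1 := by nlinarith [sq_nonneg y, sq_nonneg p]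
  set s := √(1 - (p * x) ^ 2)
  have hs0 : 0 < s := Real.sqrt_pos.2 (by linarith)
  have hs : s ^ 2 = 1 - (p * x) ^ 2 := Real.sq_sqrt (by linarith)
  set t := -(p * y) / s
  have hts : t * s = -(p * y) := div_mul_cancel₀ _ hs0.ne'
  have ht : t ^ 2 ≤ 1 := by
    rw [div_pow, neg_sq, div_le_one (by positivity)]
    nlinarith [sq_nonneg y, sq_nonneg p, sq_nonneg x]
  have hunit : ∀ σ : ℝ, σ ^ 2 = s ^ 2 → ‖((p * x : ℝ) + σ * I) * (x + y * I)‖ = 1 := by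
    intro σ hσ
    rw [norm_mul, norm_add_mul_I, norm_add_mul_I, hσ, hs, hxy]
    simp
  have hζ₁ : ‖(p * x + s * I) * (x + y * I)‖ = 1 := by simpa using hunit s rfl
  have hζ₂ : ‖(p * x - s * I) * (x + y * I)‖ = 1 := by
    simpa [sub_eq_add_neg] using hunit (-s) (neg_sq s)
  refine ⟨(1 + t) / 2, ⟨by nlinarith, by nlinarith⟩, _, _, hζ₁, hζ₂, ?_, ?_⟩
  · have hxyC : (x : ℂ) ^ 2 + (y : ℂ) ^ 2 = 1 := by exact_mod_cast hxy
    have htsC : (t : ℂ) * s = -(p * y) := by exact_mod_cast hts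
    push_cast
    linear_combination (p : ℂ) * hxyC - (p : ℂ) * y ^ 2 * I_sq + (x + y * I) * I * htsC
  · have hxyC : (x : ℂ) ^ 2 + (y : ℂ) ^ 2 = 1 := by exact_mod_cast hxy
    have htsC : (t : ℂ) * s = -(p * y) := by exact_mod_cast hts
    have hsC : (s : ℂ) ^ 2 = 1 - (p * x) ^ 2 := by exact_mod_cast hs
    push_cast
    linear_combination (x + y * I) ^ 2 * (s ^ 2 * I_sq - hsC + 2 * p * x * I * htsC) +
      (p : ℂ) ^ 2 * ((2 * x * (x + y * I) + 1) * (hxyC - y ^ 2 * I_sq))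

/-- Mixing the two-point measure of `exists_twoPoint_moments` with `δ_p` fills the disc of
admissible second moments. -/
lemma exists_moments {p : ℝ} (hp : |p| < 1) {μ : ℂ} (hμ : ‖μ‖ ≤ 1) :
    ∃ (c : Fin 3 → ℝ) (ζ : Fin 3 → ℂ), (∀ i, 0 ≤ c i) ∧ ∑ i, c i = 1 ∧ (∀ i, ‖ζ i‖ ≤ 1) ∧
      ∑ i, c i * ζ i = p ∧ ∑ i, c i * ζ i ^ 2 = p ^ 2 - (1 - p ^ 2) * μ := by
  set ξ := exp ((arg μ / 2 : ℝ) * I)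
  have hμξ : μ = ‖μ‖ * ξ ^ 2 := by
    rw [← exp_nat_mul]
    push_cast
    ring_nf
    exact (norm_mul_exp_arg_mul_I μ).symm
  obtain ⟨a, ⟨ha0, ha1⟩, ζ₁, ζ₂, hζ₁, hζ₂, hm1, hm2⟩ :=
    exists_twoPoint_moments hp (norm_exp_ofReal_mul_I (arg μ / 2))
  refine ⟨![‖μ‖ * a, ‖μ‖ * (1 - a), 1 - ‖μ‖], ![ζ₁, ζ₂, p], ?_, ?_, ?_, ?_, ?_⟩
  · intro i
    fin_cases i <;> simp <;> nlinarith [norm_nonneg μ]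
  · simp [Fin.sum_univ_three]
    ring
  · intro i
    fin_cases i <;> simp [hζ₁, hζ₂, hp.le]
  · simp [Fin.sum_univ_three]
    linear_combination (‖μ‖ : ℂ) * hm1
  · simp [Fin.sum_univ_three]
    linear_combination (‖μ‖ : ℂ) * hm2 + (1 - p ^ 2) * hμξ

theorem stmt_3 (p : ℝ) (hp : 0 < p ∧ p < 1) (A : ℂ)
    (hA : ‖A - 1 / p‖ ≤ p) :
    ∃ w₀ : ℂ, w₀ ≠ 0 ∧ ∃ f : ℂ → ℂ, SigmaStar p w₀ f ∧ a2 f = A := by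
  have hp0 : (p : ℂ) ≠ 0 := by exact_mod_cast hp.1.ne'
  have hp2 : (1 : ℂ) - p ^ 2 ≠ 0 := by
    exact_mod_cast (show (1 : ℝ) - p ^ 2 ≠ 0 by nlinarith)
  have hμ : ‖(A - 1 / p) / p‖ ≤ 1 := by
    rw [norm_div, norm_real, Real.norm_of_nonneg hp.1.le]
    exact div_le_one_of_le₀ hA hp.1.le
  obtain ⟨c, ζ, hc, hc1, hζ, hm1, hm2⟩ := exists_moments (abs_lt.2 ⟨by linarith, hp.2⟩) hμ
  set w₀ : ℂ := -p / (1 - p ^ 2) with hw₀_def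
  have hw₀ : w₀ ≠ 0 := div_ne_zero (neg_ne_zero.2 hp0) hp2
  have hL : DifferentiableOn ℂ (herglotzLog c ζ) (ball 0 1) := differentiableOn_herglotzLog hζ
  have hL'0 : deriv (herglotzLog c ζ) 0 = -(1 / w₀ + 1 / p + p) := by
    rw [deriv_herglotzLog_zero hζ, hm1, hw₀_def]
    field_simp
    ring
  refine ⟨w₀, hw₀, sigmaStarOfLog p w₀ (herglotzLog c ζ),
    ⟨_, sigmaStarWith_sigmaStarOfLog hp hw₀ hL herglotzLog_zero hL'0
      fun z hz => re_one_sub_mul_deriv_herglotzLog_pos hc hc1 hζ hz⟩, ?_⟩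
  rw [a2_sigmaStarOfLog hp hw₀ hL herglotzLog_zero hL'0, deriv_deriv_herglotzLog_zero hζ, hm2,
    hw₀_def]
  field_simp
  ring
end

section
/- Let p ∈ (0,1), let w₀ ∈ ℂ with w₀ ≠ 0, let f ∈ Σ*(p,w₀) with associated function P holomorphic on 𝔻, and write P(z) = 1 + b₁ z + b₂ z² + ⋯. Then b₁ = p + 1/p + 1/w₀ and b₂ = p² + 1/p² + 1/w₀² + 2 a₂(f)/w₀. -/
open Complex Metric Set

/-!
Since `-p/(z - p) = 1 + z/(p - z)`, near `0` we have
`P z = 1 + z G(z)` with `G = -f'/(f - w₀) + 1/(p - z) + p/(1 - p z)`, which is holomorphic at `0`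
because `f 0 = 0 ≠ w₀`. Hence `b₁ = G(0)` and `b₂ = G'(0)`, and both are read off from
`f 0 = 0`, `f' 0 = 1` and `f'' 0 = 2 a₂(f)`.
-/

open Filter Topology

section ConstAddMul

variable {𝕜 : Type*} [NontriviallyNormedField 𝕜] {F G : 𝕜 → 𝕜} {c : 𝕜}

theorem HasDerivAt.const_add_id_mul {G' z : 𝕜} (hG : HasDerivAt G G' z) :
    HasDerivAt (fun z => c + z * G z) (G z + z * G') z := by
  simpa using ((hasDerivAt_id z).mul hG).const_add c

theorem deriv_zero_of_eventuallyEq_const_add_mul (hG : DifferentiableAt 𝕜 G 0)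
    (hF : F =ᶠ[𝓝 0] fun z => c + z * G z) : deriv F 0 = G 0 := by
  simpa [hF.deriv_eq] using (hG.hasDerivAt.const_add_id_mul (c := c)).deriv

theorem iteratedDeriv_two_zero_of_eventuallyEq_const_add_mul [CompleteSpace 𝕜]
    (hG : AnalyticAt 𝕜 G 0) (hF : F =ᶠ[𝓝 0] fun z => c + z * G z) :
    iteratedDeriv 2 F 0 = 2 * deriv G 0 := by
  have hF' : deriv F =ᶠ[𝓝 0] fun z => G z + z * deriv G z := by
    filter_upwards [hF.deriv, hG.eventually_analyticAt] with z hFz hGz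
    rw [hFz]
    exact (hGz.differentiableAt.hasDerivAt.const_add_id_mul).deriv
  have h : HasDerivAt (fun z => G z + z * deriv G z)
      (deriv G 0 + (1 * deriv G 0 + 0 * deriv (deriv G) 0)) 0 :=
    hG.differentiableAt.hasDerivAt.add
      ((hasDerivAt_id (0 : 𝕜)).mul hG.deriv.differentiableAt.hasDerivAt)
  rw [iteratedDeriv_succ, iteratedDeriv_one, hF'.deriv_eq, h.deriv]
  ring

end ConstAddMul

/-- `(P z - 1) / z`, written so that it is visibly holomorphic at `0`. -/
noncomputable def sigmaStarQuotient (p : ℝ) (w₀ : ℂ) (f : ℂ → ℂ) (z : ℂ) : ℂ :=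
  -deriv f z / (f z - w₀) + 1 / (p - z) + p / (1 - p * z)

namespace SigmaStarWith

variable {p : ℝ} {w₀ : ℂ} {f P : ℂ → ℂ}

theorem analyticAt_zero (hf : SigmaStarWith p w₀ f P) (hp : p ≠ 0) : AnalyticAt ℂ f 0 := by
  obtain ⟨⟨g, hg, -, hfg⟩, -⟩ := hf
  have hball : ball (0 : ℂ) 1 ∈ 𝓝 0 := ball_mem_nhds 0 one_pos
  have hp0 : (0 : ℂ) - p ≠ 0 := by simpa using hp
  refine ((hg.analyticAt hball).div (analyticAt_id.sub analyticAt_const) hp0).congr ?_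
  filter_upwards [hball, eventually_ne_nhds (ofReal_ne_zero.mpr hp).symm] with z hz hzp
  exact (hfg z hz hzp).symm

theorem eventuallyEq_one_add_mul (hf : SigmaStarWith p w₀ f P) (hp : p ≠ 0) :
    P =ᶠ[𝓝 0] fun z => 1 + z * sigmaStarQuotient p w₀ f z := by
  obtain ⟨-, -, -, -, -, -, -, hPQ⟩ := hf
  filter_upwards [ball_mem_nhds (0 : ℂ) one_pos,
    eventually_ne_nhds (ofReal_ne_zero.mpr hp).symm] with z hz hzp
  have : (p : ℂ) - z ≠ 0 := sub_ne_zero.mpr (Ne.symm hzp)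
  rw [hPQ z hz hzp, sigmaStarQuotient, ← neg_sub (p : ℂ) z]
  field_simp
  ring

end SigmaStarWith

section Quotient

variable {p : ℝ} {w₀ : ℂ} {f : ℂ → ℂ}

theorem analyticAt_sigmaStarQuotient (hf : AnalyticAt ℂ f 0) (hfw : f 0 ≠ w₀) (hp : p ≠ 0) :
    AnalyticAt ℂ (sigmaStarQuotient p w₀ f) 0 := by
  have hp' : (p : ℂ) - 0 ≠ 0 := by simpa using hp
  exact ((hf.deriv.neg.div (hf.sub analyticAt_const) (sub_ne_zero.mpr hfw)).add
    (analyticAt_const.div (analyticAt_const.sub analyticAt_id) hp')).add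
    (analyticAt_const.div (analyticAt_const.sub (analyticAt_const.mul analyticAt_id)) (by simp))

theorem sigmaStarQuotient_zero (hf0 : f 0 = 0) (hf1 : deriv f 0 = 1) (hw : w₀ ≠ 0) (hp : p ≠ 0) :
    sigmaStarQuotient p w₀ f 0 = p + 1 / p + 1 / w₀ := by
  have hp' : (p : ℂ) ≠ 0 := by exact_mod_cast hp
  simp only [sigmaStarQuotient, hf0, hf1]
  field_simp
  ring

theorem deriv_sigmaStarQuotient_zero (hf : AnalyticAt ℂ f 0) (hf0 : f 0 = 0) (hf1 : deriv f 0 = 1)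
    (hw : w₀ ≠ 0) (hp : p ≠ 0) :
    deriv (sigmaStarQuotient p w₀ f) 0 = p ^ 2 + 1 / p ^ 2 + 1 / w₀ ^ 2 + 2 * a2 f / w₀ := by
  have hp' : (p : ℂ) ≠ 0 := by exact_mod_cast hp
  have hfw : f 0 - w₀ ≠ 0 := by simpa [hf0] using hw
  have ha2 : deriv (deriv f) 0 = 2 * a2 f := by
    rw [a2, iteratedDeriv_succ, iteratedDeriv_one]; ring
  have hlog := (hf.deriv.differentiableAt.hasDerivAt.neg).div
    (hf.differentiableAt.hasDerivAt.sub_const w₀) hfw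
  have hpole := (hasDerivAt_const (0 : ℂ) (1 : ℂ)).div
    ((hasDerivAt_id (0 : ℂ)).const_sub (p : ℂ)) (by simpa using hp')
  have hpoleInv := (hasDerivAt_const (0 : ℂ) (p : ℂ)).div
    (((hasDerivAt_id (0 : ℂ)).const_mul (p : ℂ)).const_sub 1) (by simp)
  have hG : HasDerivAt (sigmaStarQuotient p w₀ f) _ 0 := (hlog.add hpole).add hpoleInv
  rw [hG.deriv]
  simp only [id, Pi.neg_apply, hf0, hf1, ha2]
  field_simp
  ring

end Quotient

theorem stmt_5 (p : ℝ) (hp : 0 < p ∧ p < 1) (w₀ : ℂ) (hw : w₀ ≠ 0)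
    (f P : ℂ → ℂ) (hf : SigmaStarWith p w₀ f P) :
    deriv P 0 = (p : ℂ) + 1 / p + 1 / w₀ ∧
    iteratedDeriv 2 P 0 / 2 =
      (p : ℂ) ^ 2 + 1 / (p : ℂ) ^ 2 + 1 / w₀ ^ 2 + 2 * a2 f / w₀ := by
  have hp0 : p ≠ 0 := hp.1.ne'
  have hfa := hf.analyticAt_zero hp0
  have hPG := hf.eventuallyEq_one_add_mul hp0
  obtain ⟨-, hf0, hf1, -⟩ := hf
  have hG := analyticAt_sigmaStarQuotient hfa (by rw [hf0]; exact hw.symm) hp0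
  constructor
  · rw [deriv_zero_of_eventuallyEq_const_add_mul hG.differentiableAt hPG,
      sigmaStarQuotient_zero hf0 hf1 hw hp0]
  · rw [iteratedDeriv_two_zero_of_eventuallyEq_const_add_mul hG hPG,
      deriv_sigmaStarQuotient_zero hfa hf0 hf1 hw hp0]
    ring
end
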